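/- Consistency of the finite anchored inverse maps: if D_{k'} ⊆ D_k ⊆ W with W finite and simply connected, t a spanning tree of G*_{W,k}, and W' = desc_t(D_{k'}), then the restriction of the sandpile ψ_{W,k}(t) to W' equals ψ_{W',k'}(t_{W',k'}), where t_{W',k'} is the restriction of t to the edges of G*_{W',k'}. -/

import Mathlib

open Finset
open scoped Classical

namespace Anchored

variable {V : Type*} [DecidableEq V]

/-- iterating a partial parent map; `none` represents the sink. -/
def iterP (p : V → Option V) : ℕ → V → Option V
  | 0, v => some v
  | n + 1, v => (p v).bind (iterP p n)

/-- walks in the multigraph `a` avoiding the set `A` -/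
def ReachAvoid (a : V → V → ℕ) (A : Finset V) (u v : V) : Prop :=
  ∃ (nn : ℕ) (f : ℕ → V), f 0 = u ∧ f nn = v ∧ (∀ j ≤ nn, f j ∉ A) ∧
    ∀ j < nn, 0 < a (f j) (f (j + 1))

/-- oriented edges (with multiplicity index) from `v` into the finite set `T` -/
def edgesTo (a : V → V → ℕ) (v : V) (T : Finset V) : Finset (V × ℕ) :=
  T.biUnion fun w => (Finset.range (a v w)).image fun i => (w, i)

variable (a : V → V → ℕ) (S : Finset V) (out : V → Finset V)

/-- number of edges from `v` to the sink of the wired graph on `S`;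
`out v` is the set of heads of sink edges at `v` (actual vertices of `G`). -/
def sk (v : V) : ℕ := ∑ w ∈ out v, a v w

/-- degree of `v` in the wired graph on `S` -/
def degS (v : V) : ℕ := sk a out v + ∑ w ∈ S, a v w

variable (η : V → ℕ) (D : ℕ → Finset V) (kk : ℕ)

/-- number of global steps allotted to each phase of the anchored burning -/
def plen : ℕ := S.card + 1

/-- Flattened anchored burning process: `U m` is the set of unburnt vertices
after `m` global steps; phase `i` (for `i = 1, …, kk + 1`) occupies the steps
`m ∈ [(i-1)·plen, i·plen)` and forbids burning the vertices of `D (kk - i + 1)`.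
A vertex burns when its height is at least its number of edges to unburnt
vertices (the sink being burnt at time `0`). -/
def U : ℕ → Finset V
  | 0 => S
  | m + 1 => (U m).filter fun v =>
      v ∈ D (kk - m / plen S) ∨ η v < ∑ w ∈ U m, a v w

/-- the (anchored) burning time of `v` -/
noncomputable def τ (v : V) : ℕ := sInf {m | v ∉ U a S η D kk m}

/-- number of oriented edges from `v` whose head was burnt strictly before `v`
(including the sink edges) -/
noncomputable def mv (v : V) : ℕ :=
  sk a out v + ∑ w ∈ S \ U a S η D kk (τ a S η D kk v - 1), a v w

/-- the set of candidate tree edges at `v`: the oriented edges from `v` to the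
layer burnt at the previous step (at the first step of a phase: to everything
burnt in earlier phases, including the sink) -/
noncomputable def Fv (v : V) : Finset (V × ℕ) :=
  if (τ a S η D kk v - 1) % plen S = 0 then
    edgesTo a v (out v) ∪ edgesTo a v (S \ U a S η D kk (τ a S η D kk v - 1))
  else
    edgesTo a v
      (U a S η D kk (τ a S η D kk v - 2) \ U a S η D kk (τ a S η D kk v - 1))

/-- `Spec … prec e` says that `e` encodes the spanning tree assigned to `η` by
the anchored burning bijection: each `v ∈ S` gets the edge of `F_v` having
exactly `ℓ` predecessors in the ordering `prec v`, where
`η v = deg v - m_v + ℓ`. -/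
def Spec (prec : V → (V × ℕ) → (V × ℕ) → Prop) (e : V → Option (V × ℕ)) : Prop :=
  (∀ v ∉ S, e v = none) ∧
  ∀ v ∈ S, ∃ ed : V × ℕ, e v = some ed ∧ ed ∈ Fv a S out η D kk v ∧
    η v + mv a S out η D kk v =
      degS a S out v + ((Fv a S out η D kk v).filter fun f => prec v f ed).card

/-- the parent map (toward the sink) of an encoded spanning tree -/
def par (e : V → Option (V × ℕ)) (v : V) : Option V :=
  (e v).bind fun p => if p.1 ∈ S then some p.1 else none

/-- spanning trees of the wired graph on `S`, oriented toward the sink: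
every vertex of `S` carries exactly one valid oriented edge, and following
these edges one reaches the sink. -/
def IsSpanningTree (e : V → Option (V × ℕ)) : Prop :=
  (∀ v ∉ S, e v = none) ∧
  (∀ v ∈ S, ∃ w i, e v = some (w, i) ∧ i < a v w ∧ (w ∈ S ∨ w ∈ out v)) ∧
  (∀ v ∈ S, ∃ m, iterP (par S e) m v = none)

/-- stable configurations on the wired graph on `S` -/
def Stable : Prop := ∀ v ∈ S, η v < degS a S out v

/-- ample for every nonempty subset of `S` -/
def Ample : Prop := ∀ F ⊆ S, F.Nonempty → ∃ x ∈ F, ∑ y ∈ F, a x y ≤ η x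

/-- recurrent configurations on the wired graph on `S` -/
def Recurrent : Prop := Stable a S out η ∧ Ample a S η

end Anchored

/-!
Run the anchored burning on `W` with parameter `kk` and let `c = kk - kk'`. During the first
`c + 1` phases the set `D kk'` may not burn, and a tree edge always points to a vertex that burnt
earlier, so every descendant of `D kk'` is still unburnt after phase `c`. Conversely, a vertex
unburnt after phase `c` either burns at the start of a later phase, which forces it into
`D kk'`, or its tree edge points into the layer burnt one step before it; by induction on the
burning time it is a descendant of `D kk'`. So `W'` is exactly the set left after phase `c`.

The burning on `W'` with parameter `kk'` then replays phases `c + 1, c + 2, …` of the original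
process step by step: its phases are shorter, but the original process stabilizes within
`|W'|` steps of each of these phases. Hence every vertex of `W'` gets the same candidate set
`F_v` and the same threshold `deg v - m_v` in both processes, and the defining equation of the
bijection transfers unchanged.
-/

namespace Anchored

variable {V : Type*}

lemma plen_pos {S : Finset V} : 0 < plen S := Nat.succ_pos _

lemma mul_plen_add_div {S : Finset V} {j r : ℕ} (hr : r < plen S) :
    (j * plen S + r) / plen S = j := by
  rw [Nat.mul_comm, Nat.mul_add_div plen_pos, Nat.div_eq_of_lt hr, add_zero]

lemma exists_phase_decomp {p c n : ℕ} (hp : 0 < p) (h : (c + 1) * p ≤ n) :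
    ∃ i s, 1 ≤ i ∧ s < p ∧ n = (c + i) * p + s := by
  have hc : c + 1 ≤ n / p := (Nat.le_div_iff_mul_le hp).mpr h
  refine ⟨n / p - c, n % p, by omega, Nat.mod_lt _ hp, ?_⟩
  rw [Nat.add_sub_cancel' (by omega)]
  exact (Nat.div_add_mod' n p).symm

def desc (p : V → Option V) (A : Finset V) : Set V :=
  {x | ∃ m u, iterP p m x = some u ∧ u ∈ A}

section Descendants

variable {p : V → Option V} {A : Finset V}

lemma mem_desc_of_mem {u : V} (hu : u ∈ A) : u ∈ desc p A := ⟨0, u, rfl, hu⟩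

lemma mem_desc_of_eq_some {v w : V} (hvw : p v = some w) (hw : w ∈ desc p A) :
    v ∈ desc p A := by
  obtain ⟨m, u, hit, hu⟩ := hw
  exact ⟨m + 1, u, by rw [iterP, hvw, Option.bind_some, hit], hu⟩

lemma desc_induction {P : V → Prop} (hA : ∀ u ∈ A, P u)
    (hstep : ∀ v w, p v = some w → P w → P v) : ∀ x ∈ desc p A, P x := by
  rintro x ⟨m, u, hit, hu⟩
  induction m generalizing x with
  | zero => exact Option.some.inj hit ▸ hA u hu
  | succ m ih =>
    rw [iterP] at hit
    cases hpx : p x with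
    | none => rw [hpx, Option.bind_none] at hit; exact absurd hit (by simp)
    | some w => rw [hpx, Option.bind_some] at hit; exact hstep x w hpx (ih w hit)

end Descendants

variable [DecidableEq V]

lemma exists_succ_eq_of_antitone {f : ℕ → Finset V} (hf : ∀ n, f (n + 1) ⊆ f n) :
    ∃ r ≤ (f 0).card, f (r + 1) = f r := by
  induction h : (f 0).card using Nat.strong_induction_on generalizing f with
  | _ n ih =>
    by_cases h1 : f 1 = f 0
    · exact ⟨0, Nat.zero_le _, h1⟩
    · have hlt : (f 1).card < n := h ▸ card_lt_card ((hf 0).ssubset_of_ne h1)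
      obtain ⟨r, hr, hfr⟩ := ih _ hlt (f := fun n => f (n + 1)) (fun n => hf (n + 1)) rfl
      exact ⟨r + 1, by omega, hfr⟩

lemma mem_edgesTo {a : V → V → ℕ} {v w : V} {i : ℕ} {T : Finset V} :
    (w, i) ∈ edgesTo a v T ↔ w ∈ T ∧ i < a v w := by
  simp only [edgesTo, mem_biUnion, mem_image, mem_range, Prod.mk.injEq]
  constructor
  · rintro ⟨x, hx, j, hj, rfl, rfl⟩
    exact ⟨hx, hj⟩
  · rintro ⟨hw, hi⟩
    exact ⟨w, hw, i, hi, rfl, rfl⟩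

def burnStep (a : V → V → ℕ) (η : V → ℕ) (A X : Finset V) : Finset V :=
  X.filter fun v => v ∈ A ∨ η v < ∑ w ∈ X, a v w

section Burning

variable {a : V → V → ℕ} {S : Finset V} {η : V → ℕ} {D : ℕ → Finset V} {k : ℕ}

lemma U_succ (m : ℕ) :
    U a S η D k (m + 1) = burnStep a η (D (k - m / plen S)) (U a S η D k m) := rfl

lemma U_subset : ∀ m, U a S η D k m ⊆ S
  | 0 => subset_rfl
  | m + 1 => (filter_subset _ _).trans (U_subset m)

lemma U_antitone : Antitone (U a S η D k) :=
  antitone_nat_of_succ_le fun _ => filter_subset _ _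

lemma U_mul_add_succ {j r : ℕ} (hr : r < plen S) :
    U a S η D k (j * plen S + r + 1) =
      burnStep a η (D (k - j)) (U a S η D k (j * plen S + r)) := by
  rw [U_succ, mul_plen_add_div hr]

lemma U_mul_add_eq_of_succ_eq {j r r' : ℕ}
    (h : U a S η D k (j * plen S + (r + 1)) = U a S η D k (j * plen S + r))
    (hrr' : r ≤ r') (hr' : r' ≤ plen S) :
    U a S η D k (j * plen S + r') = U a S η D k (j * plen S + r) := by
  induction r', hrr' using Nat.le_induction with
  | base => rfl
  | succ r' hrr' ih =>
    rw [← add_assoc, U_mul_add_succ (by omega), ih (by omega), ← U_mul_add_succ (by omega)]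
    exact h

lemma U_mul_add_eq_phase_end {j r : ℕ} (hcard : (U a S η D k (j * plen S)).card ≤ r)
    (hr : r ≤ plen S) : U a S η D k (j * plen S + r) = U a S η D k ((j + 1) * plen S) := by
  obtain ⟨r0, hr0, h0⟩ := exists_succ_eq_of_antitone (f := fun n => U a S η D k (j * plen S + n))
    fun n => filter_subset _ _
  rw [Nat.add_zero] at hr0
  rw [add_mul, one_mul, U_mul_add_eq_of_succ_eq h0 (by omega) hr,
    U_mul_add_eq_of_succ_eq h0 (by omega) le_rfl]

lemma card_U_le (m : ℕ) : (U a S η D k m).card ≤ S.card := card_le_card (U_subset m)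

lemma burnStep_U_phase_end (j : ℕ) :
    burnStep a η (D (k - j)) (U a S η D k ((j + 1) * plen S)) =
      U a S η D k ((j + 1) * plen S) := by
  have hlast := U_mul_add_eq_phase_end (a := a) (η := η) (D := D) (k := k) (j := j)
    (card_U_le _) (Nat.le_succ S.card)
  rw [← hlast, ← U_mul_add_succ (Nat.lt_succ_self _), hlast]
  exact U_mul_add_eq_phase_end (r := plen S) ((card_U_le _).trans (Nat.le_succ _)) le_rfl

lemma mem_D_of_burn_at_phase_start {j : ℕ} {v : V}
    (h1 : v ∈ U a S η D k ((j + 1) * plen S)) (h2 : v ∉ U a S η D k ((j + 1) * plen S + 1)) :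
    v ∈ D (k - j) := by
  rw [← burnStep_U_phase_end j] at h1
  have hstep := U_mul_add_succ (a := a) (η := η) (D := D) (k := k) (j := j + 1) (plen_pos (S := S))
  rw [Nat.add_zero] at hstep
  rw [hstep] at h2
  simp only [burnStep, mem_filter] at h1 h2
  tauto

lemma lt_card_U_of_burn {j s : ℕ} {v : V} (h1 : v ∈ U a S η D k (j * plen S + s))
    (h2 : v ∉ U a S η D k (j * plen S + (s + 1))) (hs : s < plen S) :
    s < (U a S η D k (j * plen S)).card := by
  by_contra! hcard
  rw [U_mul_add_eq_phase_end hcard hs.le] at h1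
  rw [U_mul_add_eq_phase_end (by omega) hs] at h2
  exact h2 h1

lemma U_empty (hD0 : D 0 = ∅) (hample : Ample a S η) :
    U a S η D k ((k + 1) * plen S) = ∅ := by
  by_contra hne
  obtain ⟨x, hx, hxη⟩ := hample _ (U_subset _) (nonempty_iff_ne_empty.mpr hne)
  rw [← burnStep_U_phase_end k] at hx
  simp only [burnStep, mem_filter, Nat.sub_self, hD0, notMem_empty, false_or] at hx
  omega

lemma mem_U_of_lt_tau {v : V} {m : ℕ} (h : m < τ a S η D k v) : v ∈ U a S η D k m := by
  by_contra hv
  exact absurd (Nat.sInf_le hv) (not_le.mpr h)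

lemma notMem_U_tau {v : V} (hfin : ∃ m, v ∉ U a S η D k m) : v ∉ U a S η D k (τ a S η D k v) :=
  Nat.sInf_mem hfin

lemma mem_U_iff_lt_tau {v : V} (hfin : ∃ m, v ∉ U a S η D k m) {m : ℕ} :
    v ∈ U a S η D k m ↔ m < τ a S η D k v := by
  constructor
  · intro hv
    by_contra! h
    exact notMem_U_tau hfin (U_antitone h hv)
  · exact mem_U_of_lt_tau

lemma tau_eq_succ {v : V} {m : ℕ} (h1 : v ∈ U a S η D k m) (h2 : v ∉ U a S η D k (m + 1)) :
    τ a S η D k v = m + 1 :=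
  (Nat.sInf_upward_closed_eq_succ_iff (s := {m | v ∉ U a S η D k m})
    (fun _ _ h hv hu => hv (U_antitone h hu)) m).mpr ⟨h2, fun h => h h1⟩

lemma D_subset_U (hmono : Monotone D) {k₀ c : ℕ} (hk : k₀ + c ≤ k) (hDS : D k₀ ⊆ S) :
    ∀ n ≤ (c + 1) * plen S, D k₀ ⊆ U a S η D k n
  | 0, _ => hDS
  | n + 1, hn => by
    intro d hd
    have hdiv : n / plen S ≤ c := Nat.lt_succ_iff.mp ((Nat.div_lt_iff_lt_mul plen_pos).mpr hn)
    exact mem_filter.mpr ⟨D_subset_U hmono hk hDS n (by omega) hd,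
      Or.inl (hmono (by omega) hd)⟩

variable {out : V → Finset V}

lemma degS_eq (v : V) :
    degS a S out v = mv a S out η D k v + ∑ w ∈ U a S η D k (τ a S η D k v - 1), a v w := by
  have := sum_sdiff (f := a v)
    (U_subset (a := a) (S := S) (η := η) (D := D) (k := k) (τ a S η D k v - 1))
  unfold degS mv
  omega

lemma spec_eq_iff {v : V} {n : ℕ} :
    η v + mv a S out η D k v = degS a S out v + n ↔
      η v = ∑ w ∈ U a S η D k (τ a S η D k v - 1), a v w + n := by
  rw [degS_eq (η := η) (D := D) (k := k)]
  omega

lemma notMem_U_of_mem_Fv {v w : V} {i : ℕ} (h : (w, i) ∈ Fv a S out η D k v) (hw : w ∉ out v) :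
    w ∉ U a S η D k (τ a S η D k v - 1) := by
  unfold Fv at h
  split_ifs at h
  · rcases mem_union.mp h with h | h
    · exact absurd (mem_edgesTo.mp h).1 hw
    · exact (mem_sdiff.mp (mem_edgesTo.mp h).1).2
  · exact (mem_sdiff.mp (mem_edgesTo.mp h).1).2

end Burning

lemma edgesTo_sdiff_union_sdiff {a : V → V → ℕ} {v : V} {N S X : Finset V}
    (hN : ∀ w, w ∈ N ↔ 0 < a v w) (hX : X ⊆ S) :
    edgesTo a v (N \ S) ∪ edgesTo a v (S \ X) = edgesTo a v (N \ X) := by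
  ext ⟨w, i⟩
  have hpos : i < a v w → 0 < a v w := Nat.zero_lt_of_lt
  have hXS := @hX w
  simp only [mem_union, mem_edgesTo, mem_sdiff, hN]
  by_cases w ∈ S <;> tauto

section Restart

variable {a : V → V → ℕ} {η : V → ℕ} {D : ℕ → Finset V}

lemma U_add_eq_of_eq {S S' : Finset V} {k k' M M' R : ℕ}
    (h0 : U a S η D k M = U a S' η D k' M')
    (hphase : ∀ r < R, k - (M + r) / plen S = k' - (M' + r) / plen S') :
    U a S η D k (M + R) = U a S' η D k' (M' + R) := by
  induction R with
  | zero => exact h0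
  | succ R ih =>
    rw [← add_assoc, ← add_assoc, U_succ, U_succ, hphase R (Nat.lt_succ_self R),
      ih fun r hr => hphase r (hr.trans (Nat.lt_succ_self R))]

lemma U_eq_self_of_burnStep_eq {S : Finset V} {k : ℕ} (h : burnStep a η (D k) S = S) :
    ∀ m ≤ plen S, U a S η D k m = S
  | 0, _ => rfl
  | m + 1, hm => by
    rw [U_succ, Nat.div_eq_of_lt (by omega : m < plen S), Nat.sub_zero,
      U_eq_self_of_burnStep_eq h m (by omega), h]

variable {S S' : Finset V} {k k' c : ℕ}

lemma U_restart (hS' : U a S η D k ((c + 1) * plen S) = S') (hk : k = c + k') {i r : ℕ}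
    (hi : 1 ≤ i) (hr : r ≤ plen S') :
    U a S' η D k' (i * plen S' + r) = U a S η D k ((c + i) * plen S + r) := by
  have hplen : plen S' ≤ plen S := Nat.succ_le_succ (hS' ▸ card_U_le _)
  have hshift : ∀ i r, r ≤ plen S' →
      U a S' η D k' (i * plen S') = U a S η D k ((c + i) * plen S) →
      U a S' η D k' (i * plen S' + r) = U a S η D k ((c + i) * plen S + r) := by
    intro i r hr h0
    refine U_add_eq_of_eq h0 fun r' hr' => ?_
    rw [mul_plen_add_div (by omega), mul_plen_add_div (by omega)]
    omega
  induction i, hi using Nat.le_induction generalizing r with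
  | base =>
    refine hshift 1 r hr ?_
    have hfix : burnStep a η (D k') S' = S' := by
      rw [← hS', show k' = k - c by omega]
      exact burnStep_U_phase_end c
    rw [one_mul, U_eq_self_of_burnStep_eq hfix _ le_rfl, hS']
  | succ i hi ih =>
    refine hshift (i + 1) r hr ?_
    have hcard : (U a S η D k ((c + i) * plen S)).card ≤ plen S' - 1 :=
      hS' ▸ card_le_card (U_antitone (Nat.mul_le_mul_right _ (by omega)))
    rw [add_mul, one_mul, ih le_rfl, U_mul_add_eq_phase_end (by omega) hplen, add_assoc]

lemma tau_restart (hS' : U a S η D k ((c + 1) * plen S) = S') (hk : k = c + k') {v : V}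
    (hfin : ∃ m, v ∉ U a S η D k m) (hv : v ∈ S') :
    ∃ i s, 1 ≤ i ∧ s + 1 < plen S' ∧ τ a S η D k v = (c + i) * plen S + s + 1 ∧
      τ a S' η D k' v = i * plen S' + s + 1 := by
  have hlt : (c + 1) * plen S < τ a S η D k v := (mem_U_iff_lt_tau hfin).mp (hS' ▸ hv)
  obtain ⟨i, s, hi, hs, hdec⟩ :=
    exists_phase_decomp (n := τ a S η D k v - 1) (c := c) (p := plen S) plen_pos (by omega)
  have h1 : v ∈ U a S η D k ((c + i) * plen S + s) := mem_U_of_lt_tau (by omega)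
  have h2 : v ∉ U a S η D k ((c + i) * plen S + (s + 1)) := by
    rw [← add_assoc, ← hdec, Nat.sub_add_cancel (by omega)]
    exact notMem_U_tau hfin
  have hsS' : s < S'.card := (lt_card_U_of_burn h1 h2 hs).trans_le
    (hS' ▸ card_le_card (U_antitone (Nat.mul_le_mul_right _ (by omega))))
  refine ⟨i, s, hi, Nat.succ_lt_succ hsS', by omega, tau_eq_succ ?_ ?_⟩
  · rwa [U_restart hS' hk hi (by unfold plen; omega)]
  · rwa [add_assoc, U_restart hS' hk hi (by unfold plen; omega)]

lemma U_tau_pred_restart (hS' : U a S η D k ((c + 1) * plen S) = S') (hk : k = c + k')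
    {v : V} (hfin : ∃ m, v ∉ U a S η D k m) (hv : v ∈ S') :
    U a S' η D k' (τ a S' η D k' v - 1) = U a S η D k (τ a S η D k v - 1) := by
  obtain ⟨i, s, hi, hs, hT, hT'⟩ := tau_restart hS' hk hfin hv
  rw [hT, hT', Nat.add_sub_cancel, Nat.add_sub_cancel, U_restart hS' hk hi (by omega)]

lemma Fv_restart (hS' : U a S η D k ((c + 1) * plen S) = S') (hk : k = c + k')
    (hmono : Monotone D) {out out' : V → Finset V} {nbrs : Finset V} {v : V}
    (hnbrs : ∀ w, w ∈ nbrs ↔ 0 < a v w)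
    (hout : out v = if v ∈ D k then nbrs \ S else ∅)
    (hout' : out' v = if v ∈ D k' then nbrs \ S' else ∅)
    (hfin : ∃ m, v ∉ U a S η D k m) (hv : v ∈ S') :
    Fv a S' out' η D k' v = Fv a S out η D k v := by
  obtain ⟨i, s, hi, hs, hT, hT'⟩ := tau_restart hS' hk hfin hv
  have hplen : plen S' ≤ plen S := Nat.succ_le_succ (hS' ▸ card_U_le _)
  unfold Fv
  rw [hT, hT', Nat.add_sub_cancel, Nat.add_sub_cancel]
  rcases s with _ | s
  · rw [Nat.add_zero] at hT
    have hphase : c + i - 1 + 1 = c + i := by omega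
    have h1 : v ∈ U a S η D k ((c + i - 1 + 1) * plen S) := by
      rw [hphase]; exact mem_U_of_lt_tau (by omega)
    have h2 : v ∉ U a S η D k ((c + i - 1 + 1) * plen S + 1) := by
      rw [hphase, ← hT]; exact notMem_U_tau hfin
    have hvD : v ∈ D k' := hmono (by omega) (mem_D_of_burn_at_phase_start h1 h2)
    have hU := U_restart hS' hk hi (r := 0) (Nat.zero_le _)
    rw [Nat.add_zero, Nat.add_zero] at hU
    simp only [Nat.add_zero, Nat.mul_mod_left, ↓reduceIte]
    rw [hout, hout', if_pos hvD, if_pos (hmono (by omega) hvD),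
      edgesTo_sdiff_union_sdiff hnbrs (U_subset _), edgesTo_sdiff_union_sdiff hnbrs (U_subset _),
      hU]
  · rw [Nat.mul_add_mod_of_lt (show s + 1 < plen S' by omega),
      Nat.mul_add_mod_of_lt (show s + 1 < plen S by omega), if_neg (Nat.succ_ne_zero s),
      if_neg (Nat.succ_ne_zero s), show i * plen S' + (s + 1) + 1 - 2 = i * plen S' + s by omega,
      show (c + i) * plen S + (s + 1) + 1 - 2 = (c + i) * plen S + s by omega,
      U_restart hS' hk hi (r := s) (by omega), U_restart hS' hk hi (r := s + 1) (by omega)]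

end Restart

lemma par_eq_some_iff {S : Finset V} {e : V → Option (V × ℕ)} {v w : V} :
    par S e v = some w ↔ w ∈ S ∧ ∃ i, e v = some (w, i) := by
  unfold par
  rcases e v with _ | ⟨w', i⟩ <;> aesop

section Tree

variable {a : V → V → ℕ} {W : Finset V} {out : V → Finset V} {η : V → ℕ}
  {D : ℕ → Finset V} {k : ℕ} {prec : V → (V × ℕ) → (V × ℕ) → Prop} {t : V → Option (V × ℕ)}

lemma tau_lt_tau_of_par (hspec : Spec a W out η D k prec t) (hout : ∀ v, Disjoint (out v) W)
    (hfin : ∀ v, ∃ m, v ∉ U a W η D k m) {v w : V} (hvw : par W t v = some w) :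
    τ a W η D k w < τ a W η D k v := by
  obtain ⟨hwW, i, htv⟩ := par_eq_some_iff.mp hvw
  have hvW : v ∈ W := by
    by_contra hv
    simp [hspec.1 v hv] at htv
  obtain ⟨ed, hed, hedF, -⟩ := hspec.2 v hvW
  rw [htv, Option.some_inj] at hed
  subst hed
  have hpos : 0 < τ a W η D k v := (mem_U_iff_lt_tau (m := 0) (hfin v)).mp hvW
  have hw := (mem_U_iff_lt_tau (hfin w)).not.mp
    (notMem_U_of_mem_Fv hedF (disjoint_right.mp (hout v) hwW))
  omega

lemma lt_tau_of_mem_desc (hspec : Spec a W out η D k prec t) (hout : ∀ v, Disjoint (out v) W)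
    (hfin : ∀ v, ∃ m, v ∉ U a W η D k m) (hmono : Monotone D) {k₀ c : ℕ} (hk : k₀ + c ≤ k)
    (hDW : D k₀ ⊆ W) : ∀ x ∈ desc (par W t) (D k₀), (c + 1) * plen W < τ a W η D k x :=
  desc_induction
    (fun u hu => (mem_U_iff_lt_tau (hfin u)).mp (D_subset_U hmono hk hDW _ le_rfl hu))
    fun _ _ hvw hw => hw.trans (tau_lt_tau_of_par hspec hout hfin hvw)

lemma U_subset_desc (hspec : Spec a W out η D k prec t) (hfin : ∀ v, ∃ m, v ∉ U a W η D k m)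
    (hmono : Monotone D) {k₀ c : ℕ} (hk : k = c + k₀) :
    ∀ v ∈ U a W η D k ((c + 1) * plen W), v ∈ desc (par W t) (D k₀) := by
  suffices h : ∀ T, ∀ v ∈ U a W η D k ((c + 1) * plen W), τ a W η D k v = T →
      v ∈ desc (par W t) (D k₀) from fun v hv => h _ v hv rfl
  intro T
  induction T using Nat.strong_induction_on with
  | _ T ih =>
    intro v hv hT
    have hlt := (mem_U_iff_lt_tau (hfin v)).mp hv
    obtain ⟨i, s, hi, hs, hdec⟩ :=
      exists_phase_decomp (n := T - 1) (c := c) (p := plen W) plen_pos (by omega)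
    rcases s with _ | s
    · have hphase : c + i - 1 + 1 = c + i := by omega
      have h1 : v ∈ U a W η D k ((c + i - 1 + 1) * plen W) := by
        rw [hphase]; exact mem_U_of_lt_tau (by omega)
      have h2 : v ∉ U a W η D k ((c + i - 1 + 1) * plen W + 1) := by
        rw [hphase, show (c + i) * plen W + 1 = T by omega, ← hT]; exact notMem_U_tau (hfin v)
      exact mem_desc_of_mem (hmono (by omega) (mem_D_of_burn_at_phase_start h1 h2))
    · obtain ⟨⟨w, j⟩, hed, hedF, -⟩ := hspec.2 v (U_subset _ hv)
      unfold Fv at hedF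
      rw [hT, hdec, Nat.mul_add_mod_of_lt hs, if_neg (Nat.succ_ne_zero s)] at hedF
      obtain ⟨hw2, hw1⟩ := mem_sdiff.mp (mem_edgesTo.mp hedF).1
      have hτw := (mem_U_iff_lt_tau (hfin w)).not.mp hw1
      have hci : (c + 1) * plen W ≤ (c + i) * plen W := Nat.mul_le_mul_right _ (by omega)
      have hwU : w ∈ U a W η D k ((c + 1) * plen W) := U_antitone (by omega) hw2
      exact mem_desc_of_eq_some (par_eq_some_iff.mpr ⟨U_subset _ hw2, j, hed⟩)
        (ih _ (by omega) w hwU rfl)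

end Tree

end Anchored

open Anchored

theorem stmt9_general {V : Type*} [DecidableEq V]
    (a : V → V → ℕ) (nbrs : V → Finset V)
    (hnbrs : ∀ v w, w ∈ nbrs v ↔ 0 < a v w)
    (D : ℕ → Finset V) (hmono : Monotone D) (hD0 : D 0 = ∅)
    (prec : V → (V × ℕ) → (V × ℕ) → Prop)
    (kk kk' : ℕ) (hkk : kk' ≤ kk)
    (W : Finset V) (hDW : D kk ⊆ W)
    (outW : V → Finset V)
    (houtW : ∀ v, outW v = if v ∈ D kk then nbrs v \ W else ∅)
    (η : V → ℕ) (t : V → Option (V × ℕ))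
    (hrec : Anchored.Recurrent a W outW η)
    (hspec : Anchored.Spec a W outW η D kk prec t)
    (W' : Finset V)
    (hW' : ∀ x, x ∈ W' ↔ ∃ (m : ℕ) (u : V),
      Anchored.iterP (Anchored.par W t) m x = some u ∧ u ∈ D kk')
    (outW' : V → Finset V)
    (houtW' : ∀ v, outW' v = if v ∈ D kk' then nbrs v \ W' else ∅) :
    Anchored.Spec a W' outW' η D kk' prec
      (fun v => if v ∈ W' then t v else none) := by
  have hfin : ∀ v, ∃ m, v ∉ U a W η D kk m :=
    fun v => ⟨_, by rw [U_empty hD0 hrec.2]; exact notMem_empty v⟩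
  have hout : ∀ v, Disjoint (outW v) W := fun v => by
    rw [houtW v]; split_ifs
    exacts [sdiff_disjoint, disjoint_empty_left _]
  have hk : kk = (kk - kk') + kk' := by omega
  have hS' : U a W η D kk ((kk - kk' + 1) * plen W) = W' := by
    ext v
    rw [hW' v]
    exact ⟨U_subset_desc hspec hfin hmono hk v, fun hv => mem_U_of_lt_tau
      (lt_tau_of_mem_desc hspec hout hfin hmono (by omega) ((hmono hkk).trans hDW) v hv)⟩
  refine ⟨fun v hv => if_neg hv, fun v hv => ?_⟩
  obtain ⟨ed, hed, hedF, heq⟩ := hspec.2 v (U_subset _ (hS' ▸ hv))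
  have hF := Fv_restart hS' hk hmono (hnbrs v) (houtW v) (houtW' v) (hfin v) hv
  refine ⟨ed, by dsimp only; rw [if_pos hv, hed], hF ▸ hedF, ?_⟩
  rw [hF, spec_eq_iff, U_tau_pred_restart hS' hk (hfin v) hv]
  exact spec_eq_iff.mp heq

/-- Consistency of the finite anchored inverse maps: if
`D k' ⊆ D k ⊆ W` with `W` finite and simply connected, `t` is a spanning tree
of `G*_{W,k}` with `η = ψ_{W,k} t` (i.e. `φ` maps `η` to `t` on `G*_{W,k}`),
and `W' = desc_t (D k')`, then the restriction of `η` to `W'` corresponds to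
the restriction `t_{W',k'}` of `t` to the edges of `G*_{W',k'}` under the
anchored bijection of `G*_{W',k'}`. -/
theorem stmt9 {V : Type*} [DecidableEq V] [Infinite V]
    (a : V → V → ℕ) (nbrs : V → Finset V)
    (hsymm : ∀ u v, a u v = a v u) (hloop : ∀ v, a v v = 0)
    (hnbrs : ∀ v w, w ∈ nbrs v ↔ 0 < a v w)
    (hlf : ∀ v, {w | 0 < a v w}.Finite)
    (hconn : ∀ u v : V, Anchored.ReachAvoid a ∅ u v)
    (D : ℕ → Finset V) (hmono : Monotone D) (hD0 : D 0 = ∅)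
    (hcover : ∀ v, ∃ j, v ∈ D j)
    (hsc : ∀ j, 1 ≤ j → ∀ v ∉ D j, {w | Anchored.ReachAvoid a (D j) v w}.Infinite)
    (prec : V → (V × ℕ) → (V × ℕ) → Prop)
    (hprec : ∀ v, IsStrictTotalOrder (V × ℕ) (prec v))
    (kk kk' : ℕ) (hkk'1 : 1 ≤ kk') (hkk : kk' ≤ kk)
    (W : Finset V) (hDW : D kk ⊆ W)
    (hWsc : ∀ v ∉ W, {w | Anchored.ReachAvoid a W v w}.Infinite)
    (outW : V → Finset V)
    (houtW : ∀ v, outW v = if v ∈ D kk then nbrs v \ W else ∅)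
    (η : V → ℕ) (t : V → Option (V × ℕ))
    (hrec : Anchored.Recurrent a W outW η)
    (ht : Anchored.IsSpanningTree a W outW t)
    (hspec : Anchored.Spec a W outW η D kk prec t)
    (W' : Finset V)
    (hW' : ∀ x, x ∈ W' ↔ ∃ (m : ℕ) (u : V),
      Anchored.iterP (Anchored.par W t) m x = some u ∧ u ∈ D kk')
    (outW' : V → Finset V)
    (houtW' : ∀ v, outW' v = if v ∈ D kk' then nbrs v \ W' else ∅) :
    Anchored.Spec a W' outW' η D kk' prec
      (fun v => if v ∈ W' then t v else none) :=
  stmt9_general a nbrs hnbrs D hmono hD0 prec kk kk' hkk W hDW outW houtW η t hrec hspec W' hW'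
    outW' houtW'
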